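/- Define v_{k,n} := sum over i from n+1 to n+k of [ -C(n-i, i) * C(n+k+i, 2i+1) + C(n-i, i-1) * C(n+k+i, 2i) ] with generalized binomial coefficients. Then for all integers n ≥ 0 and k ≥ 1, v_{k,n} = (-1)^n * C(n+k, n+1). -/

import Mathlib

open Finset

/-- Generalized binomial coefficient: classical for nonnegative upper index,
`(-1)^k * C(k-m-1, k)` for negative upper index, and `0` for negative lower index. -/
def gchoose (m k : ℤ) : ℤ :=
  if k < 0 then 0
  else if m < 0 then (-1) ^ k.toNat * ((k - m - 1).toNat.choose k.toNat : ℤ)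
  else (m.toNat.choose k.toNat : ℤ)

/-- The double sequence `v_{k,n}`. -/
noncomputable def vseq (k n : ℤ) : ℤ :=
  ∑ i ∈ Finset.Icc (n + 1) (n + k),
    (-(gchoose (n - i) i * gchoose (n + k + i) (2 * i + 1))
      + gchoose (n - i) (i - 1) * gchoose (n + k + i) (2 * i))

/-! With `i = n + 1 + j` the upper indices `n - i = -j - 1` are negative and
`C(-j-1, m) = (-1)^m C(m+j, j)`, so
`v_{k,n} = (-1)^n ∑_{j<k} (-1)^j [C(n+2j+1, j) C(2n+k+j+1, 2n+2j+3)`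
`                                 + C(n+2j, j) C(2n+k+j+1, 2n+2j+2)]`.
Expanding both `C(2n+k+j+1, ·)` by Vandermonde over `(n+k) + (n+j+1)` and swapping the sums,
the coefficient of `C(n+k, t)` is `∑_{j<k} (-1)^j vcoeff n j t`, which is `[t = n+1]`:
multiplied by `t - n - 1` it telescopes (`vcert` is the antidifference) to a boundary term that
vanishes for `t ≤ n + k`. -/

lemma sum_Icc_add_one_eq_sum_range {M : Type*} [AddCommMonoid M] (f : ℤ → M) (a : ℤ)
    (k : ℕ) :
    ∑ i ∈ Icc (a + 1) (a + k), f i = ∑ j ∈ range k, f (a + 1 + j) := by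
  symm
  apply sum_nbij' (fun j : ℕ => a + 1 + (j : ℤ)) (fun i => (i - a - 1).toNat) <;> intros <;>
    simp_all <;> omega

lemma gchoose_of_neg (m : ℤ) {k : ℤ} (hk : k < 0) : gchoose m k = 0 := by
  simp [gchoose, hk]

lemma gchoose_natCast (N k : ℕ) : gchoose N k = N.choose k := by
  rw [gchoose, if_neg (by omega), if_neg (by omega)]
  simp

lemma gchoose_eq_zero_of_lt {m k : ℤ} (hm : 0 ≤ m) (h : m < k) : gchoose m k = 0 := by
  lift m to ℕ using hm
  lift k to ℕ using by omega
  rw [gchoose_natCast, Nat.choose_eq_zero_of_lt (by omega), Nat.cast_zero]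

lemma gchoose_neg_sub_one (a k : ℕ) :
    gchoose (-a - 1) k = (-1) ^ k * ((k + a).choose a : ℤ) := by
  rw [gchoose, if_neg (by omega), if_pos (by omega), ← Nat.choose_symm_add]
  congr 3
  omega

lemma gchoose_natCast_add_one (N : ℕ) (k : ℤ) :
    gchoose (N + 1) (k + 1) = gchoose N k + gchoose N (k + 1) := by
  obtain hk | rfl | hk : k < -1 ∨ k = -1 ∨ 0 ≤ k := by omega
  · simp [gchoose_of_neg _ (show k < 0 by omega), gchoose_of_neg _ (show k + 1 < 0 by omega)]
  · simp [gchoose]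
  · lift k to ℕ using hk
    rw [← Nat.cast_add_one N, ← Nat.cast_add_one k, gchoose_natCast, gchoose_natCast,
      gchoose_natCast, Nat.choose_succ_succ, Nat.cast_add]

lemma add_one_mul_gchoose_natCast (N : ℕ) (k : ℤ) :
    (k + 1) * gchoose N (k + 1) = (N - k) * gchoose N k := by
  obtain hk | rfl | hk : k < -1 ∨ k = -1 ∨ 0 ≤ k := by omega
  · simp [gchoose_of_neg _ (show k < 0 by omega), gchoose_of_neg _ (show k + 1 < 0 by omega)]
  · simp [gchoose]
  · lift k to ℕ using hk
    rw [← Nat.cast_add_one k, gchoose_natCast, gchoose_natCast]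
    obtain hkN | hNk := le_or_gt k N
    · have := Nat.choose_succ_right_eq N k
      zify [hkN] at this
      push_cast
      linear_combination this
    · rw [Nat.choose_eq_zero_of_lt hNk, Nat.choose_eq_zero_of_lt (by omega)]
      simp

lemma add_one_mul_gchoose_natCast_add_one (N : ℕ) (k : ℤ) :
    (k + 1) * gchoose (N + 1) (k + 1) = (N + 1) * gchoose N k := by
  obtain hk | rfl | hk : k < -1 ∨ k = -1 ∨ 0 ≤ k := by omega
  · simp [gchoose_of_neg _ (show k < 0 by omega), gchoose_of_neg _ (show k + 1 < 0 by omega)]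
  · simp [gchoose]
  · lift k to ℕ using hk
    rw [← Nat.cast_add_one N, ← Nat.cast_add_one k, gchoose_natCast, gchoose_natCast]
    have := Nat.add_one_mul_choose_eq N k
    zify at this
    push_cast
    linear_combination -this

lemma gchoose_add_eq_sum_range (M N : ℕ) (a : ℤ) :
    gchoose (M + N) a = ∑ t ∈ range (N + 1), (N.choose t : ℤ) * gchoose M (a - t) := by
  rcases lt_or_ge a 0 with ha | ha
  · rw [gchoose_of_neg _ ha]
    exact (sum_eq_zero fun t _ => by rw [gchoose_of_neg _ (by omega), mul_zero]).symm
  lift a to ℕ using ha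
  set F : ℕ → ℤ := fun t => (N.choose t : ℤ) * gchoose M (a - t)
  have hsupport : ∀ t, F t ≠ 0 → t ∈ range (N + 1) ∧ t ∈ range (a + 1) := by
    intro t ht
    refine ⟨mem_range.2 ?_, mem_range.2 ?_⟩ <;> by_contra! h
    · exact ht (by simp [F, Nat.choose_eq_zero_of_lt (show N < t by omega)])
    · exact ht (by simp only [F]; rw [gchoose_of_neg _ (by omega), mul_zero])
  rw [← Nat.cast_add, gchoose_natCast, add_comm, Nat.add_choose_eq,
    Nat.sum_antidiagonal_eq_sum_range_succ (fun i j => N.choose i * M.choose j), Nat.cast_sum]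
  calc ∑ t ∈ range (a + 1), ((N.choose t * M.choose (a - t) : ℕ) : ℤ)
      = ∑ t ∈ range (a + 1), F t := sum_congr rfl fun t ht => by
        rw [Nat.cast_mul, ← gchoose_natCast M, Nat.cast_sub (by simpa [Nat.lt_succ_iff] using ht)]
    _ = ∑ t ∈ range (a + N + 1), F t :=
        sum_subset (range_subset_range.2 (by omega))
          fun t _ h => not_not.1 fun h' => h (hsupport t h').2
    _ = ∑ t ∈ range (N + 1), F t :=
        (sum_subset (range_subset_range.2 (by omega))
          fun t _ h => not_not.1 fun h' => h (hsupport t h').1).symm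

def vcoeff (n j : ℕ) (t : ℤ) : ℤ :=
  (n + 2 * j + 1).choose j * gchoose (n + j + 1) (2 * n + 2 * j + 3 - t)
    + (n + 2 * j).choose j * gchoose (n + j + 1) (2 * n + 2 * j + 2 - t)

def vcert (n : ℕ) (t : ℤ) (j : ℕ) : ℤ :=
  (-1) ^ j * j * (n + 2 * j).choose j * gchoose (n + j) (2 * n + 2 * j + 1 - t)

lemma sub_mul_vcoeff (n j : ℕ) (t : ℤ) :
    (t - n - 1) * ((-1) ^ j * vcoeff n j t) = vcert n t j - vcert n t (j + 1) := by
  set s : ℤ := 2 * n + 2 * j + 1 - t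
  have h1 : ((j : ℤ) + 1) * ((n + 2 * j + 2).choose (j + 1) : ℤ)
      = ((n : ℤ) + 2 * j + 2) * ((n + 2 * j + 1).choose j : ℤ) := by
    have := Nat.add_one_mul_choose_eq (n + 2 * j + 1) j
    zify at this
    linear_combination -this
  have h2 : ((n : ℤ) + j + 1) * ((n + 2 * j + 1).choose j : ℤ)
      = ((n : ℤ) + 2 * j + 1) * ((n + 2 * j).choose j : ℤ) := by
    have := Nat.choose_mul_succ_eq (n + 2 * j) j
    rw [show n + 2 * j + 1 - j = n + j + 1 by omega] at this
    zify at this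
    linear_combination -this
  have h3 := gchoose_natCast_add_one (n + j) s
  have h4 := add_one_mul_gchoose_natCast (n + j) s
  have h5 := add_one_mul_gchoose_natCast_add_one (n + j) (s + 1)
  simp only [vcoeff, vcert, show 2 * (n : ℤ) + 2 * j + 3 - t = s + 1 + 1 by ring,
    show 2 * (n : ℤ) + 2 * j + 2 - t = s + 1 by ring]
  push_cast at h3 h4 h5 ⊢
  rw [show n + 2 * (j + 1) = n + 2 * j + 2 by ring, show (n : ℤ) + (j + 1) = n + j + 1 by ring,
    show 2 * (n : ℤ) + 2 * (j + 1) + 1 - t = s + 1 + 1 by ring, pow_succ]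
  linear_combination (-1) ^ j * (-gchoose (n + j + 1) (s + 1 + 1) * h1
    - gchoose (n + j) (s + 1) * h2 + ((t - n - 1) * (n + 2 * j).choose j) * h3
    - (n + 2 * j).choose j * h4 - (n + 2 * j + 1).choose j * h5)

lemma vcoeff_add_one (n j : ℕ) : vcoeff n j (n + 1) = if j = 0 then 1 else 0 := by
  rw [vcoeff, show 2 * (n : ℤ) + 2 * j + 3 - (n + 1) = n + j + 1 + (j + 1) by ring,
    show 2 * (n : ℤ) + 2 * j + 2 - (n + 1) = n + j + 1 + j by ring,
    gchoose_eq_zero_of_lt (by omega) (by omega), mul_zero, zero_add]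
  split_ifs with hj
  · have := gchoose_natCast (n + 1) (n + 1)
    push_cast at this
    simp [hj, this]
  · rw [gchoose_eq_zero_of_lt (by omega) (by omega), mul_zero]

lemma sum_range_vcoeff (n k : ℕ) {t : ℤ} (ht : t ≤ n + k) :
    ∑ j ∈ range k, (-1) ^ j * vcoeff n j t = if t = n + 1 then 1 else 0 := by
  split_ifs with h
  · subst h
    rw [sum_eq_single_of_mem 0 (mem_range.2 (by omega)) fun j _ hj => by simp [vcoeff_add_one, hj]]
    simp [vcoeff_add_one]
  · have hvanish : (t - n - 1) * ∑ j ∈ range k, (-1) ^ j * vcoeff n j t = 0 := by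
      rw [mul_sum, sum_congr rfl fun j _ => sub_mul_vcoeff n j t, sum_range_sub']
      simp [vcert, gchoose_eq_zero_of_lt (show 0 ≤ (n : ℤ) + k by omega)
        (show (n : ℤ) + k < 2 * n + 2 * k + 1 - t by omega)]
    exact (mul_eq_zero.1 hvanish).resolve_left (by omega)

lemma vseq_eq_sum_vcoeff (n k : ℕ) :
    vseq k n = (-1) ^ n * ∑ t ∈ range (n + k + 1),
      ((n + k).choose t : ℤ) * ∑ j ∈ range k, (-1) ^ j * vcoeff n j t := by
  rw [vseq, sum_Icc_add_one_eq_sum_range]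
  simp only [mul_sum]
  rw [sum_comm]
  refine sum_congr rfl fun j _ => ?_
  have hneg : (n : ℤ) - (n + 1 + j) = -j - 1 := by ring
  have hupper : (n : ℤ) + k + (n + 1 + j) = (n + j + 1 : ℕ) + (n + k : ℕ) := by
    push_cast; ring
  rw [hneg, hupper, gchoose_add_eq_sum_range, gchoose_add_eq_sum_range,
    show (n : ℤ) + 1 + j = (n + 1 + j : ℕ) by push_cast; ring, gchoose_neg_sub_one,
    show ((n + 1 + j : ℕ) : ℤ) - 1 = (n + j : ℕ) by push_cast; ring, gchoose_neg_sub_one]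
  simp only [vcoeff, mul_sum, ← sum_neg_distrib, ← sum_add_distrib]
  refine sum_congr rfl fun t _ => ?_
  rw [show n + 1 + j + j = n + 2 * j + 1 by ring, show n + j + j = n + 2 * j by ring]
  push_cast
  rw [show 2 * ((n : ℤ) + 1 + j) + 1 - t = 2 * n + 2 * j + 3 - t by ring,
    show 2 * ((n : ℤ) + 1 + j) - t = 2 * n + 2 * j + 2 - t by ring]
  ring

theorem stmt_15_general (n k : ℕ) :
    vseq k n = (-1) ^ n * ((n + k).choose (n + 1) : ℤ) := by
  rw [vseq_eq_sum_vcoeff]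
  congr 1
  calc ∑ t ∈ range (n + k + 1), ((n + k).choose t : ℤ) * ∑ j ∈ range k,
        (-1) ^ j * vcoeff n j t
      = ∑ t ∈ range (n + k + 1), ((n + k).choose t : ℤ) * if t = n + 1 then 1 else 0 := by
        refine sum_congr rfl fun t ht => ?_
        rw [sum_range_vcoeff n k (by have := mem_range.1 ht; omega)]
        norm_cast
    _ = ((n + k).choose (n + 1) : ℤ) := by
        rw [sum_eq_single (n + 1) (fun t _ ht => by simp [ht]) fun h => by
          simp [Nat.choose_eq_zero_of_lt (show n + k < n + 1 by simp at h; omega)]]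
        simp

theorem stmt_15 (n k : ℕ) (hk : 1 ≤ k) :
    vseq k n = (-1) ^ n * ((n + k).choose (n + 1) : ℤ) :=
  stmt_15_general n k
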